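/- arXiv:1707.09648 — 9 statements merged into one kernel-verified Lean document; each statement's English description precedes it below -/
import Mathlib

section
/- Setting b_n' = b_n − β + α − a_n, one has the identity a_n·b_n' = (a_n − b_n)(α − a_n) − 1; consequently, if α − a_n ≥ 2 then 0 < b_n' < α − a_n. -/
/-- Let `α, aₙ, bₙ` be integers with `aₙ ≥ 2`, `1 ≤ bₙ < aₙ`,
`α − aₙ ≥ 2`, and `aₙ ∣ α·bₙ + 1`, and set `β = (α·bₙ + 1)/aₙ`.
Setting `bₙ' = bₙ − β + α − aₙ`, one has `aₙ·bₙ' = (aₙ − bₙ)(α − aₙ) − 1`;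
consequently (since `α − aₙ ≥ 2`) `0 < bₙ' < α − aₙ`. -/
theorem seifert_data_reversed_b_bounds
    (α aN bN : ℤ) (haN : 2 ≤ aN) (hbN1 : 1 ≤ bN) (hbN2 : bN < aN)
    (hα : 2 ≤ α - aN)
    (β : ℤ) (hβ : aN * β = α * bN + 1) :
    aN * (bN - β + α - aN) = (aN - bN) * (α - aN) - 1 ∧
      0 < bN - β + α - aN ∧ bN - β + α - aN < α - aN := by
  have hid : aN * (bN - β + α - aN) = (aN - bN) * (α - aN) - 1 := by ring_nf; linarith [hβ]
  refine ⟨hid, ?_, ?_⟩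
  · nlinarith [mul_pos (show (0:ℤ) < aN - bN by linarith) (show (0:ℤ) < α - aN by linarith)]
  · nlinarith [mul_le_mul_of_nonneg_right (show aN - bN ≤ aN - 1 by linarith) (show (0:ℤ) ≤ α - aN by linarith)]
end

section
/- If a_n < α, then the tuple (n−e; (a_1, a_1−b_1),…,(a_{n−1}, a_{n−1}−b_{n−1}), (α−a_n, b_n−β+α−a_n)) is again Seifert homology sphere data; explicitly, ∑_{j=1}^{n−1} (a_j − b_j)·(α − a_n)·∏_{1≤i≤n−1, i≠j} a_i + (b_n − β + α − a_n)·α = −1 + (n−e)·α·(α − a_n). -/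
/-- For Seifert homology sphere data `(e; (a_1,b_1),…,(a_n,b_n))`,
with `α = ∏_{j=1}^{n−1} a_j` and `β = (α·bₙ + 1)/aₙ ∈ ℤ`, if `aₙ < α` then the
tuple `(n−e; (a_1,a_1−b_1),…,(a_{n−1},a_{n−1}−b_{n−1}),(α−aₙ, bₙ−β+α−aₙ))` is
again Seifert homology sphere data; explicitly,
`∑_{j=1}^{n−1} (a_j − b_j)·(α − aₙ)·∏_{1≤i≤n−1, i≠j} a_i + (bₙ−β+α−aₙ)·α
  = −1 + (n−e)·α·(α − aₙ)`. -/
theorem seifert_data_pos_surgery_reversed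
    (n : ℕ) (hn : 1 ≤ n) (e : ℤ) (a b : Fin n → ℤ)
    (ha : ∀ j, 1 ≤ a j)
    (h : ∑ j, b j * ∏ i ∈ Finset.univ.erase j, a i = -1 + e * ∏ i, a i)
    (ln : Fin n) (hln : (ln : ℕ) = n - 1)
    (α : ℤ) (hα : α = ∏ i ∈ Finset.univ.erase ln, a i)
    (β : ℤ) (hβ : a ln * β = α * b ln + 1)
    (hlt : a ln < α) :
    ∑ j ∈ Finset.univ.erase ln,
        (a j - b j) * (α - a ln) * ∏ i ∈ (Finset.univ.erase ln).erase j, a i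
      + (b ln - β + α - a ln) * α
      = -1 + ((n : ℤ) - e) * α * (α - a ln) := by
  have hane : a ln ≠ 0 := by have := ha ln; omega
  set T := Finset.univ.erase ln with hT
  have hmem : ln ∈ (Finset.univ : Finset (Fin n)) := Finset.mem_univ ln
  have key : b ln * α + a ln * ∑ j ∈ T, b j * ∏ i ∈ T.erase j, a i
      = -1 + e * (a ln * α) := by
    rw [Finset.mul_sum]
    have h2 : ∀ j ∈ T, a ln * (b j * ∏ i ∈ T.erase j, a i)
        = b j * ∏ i ∈ Finset.univ.erase j, a i := by
      intro j hj
      have hjln : ln ≠ j := (Finset.ne_of_mem_erase hj).symm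
      have hll : ln ∈ Finset.univ.erase j :=
        Finset.mem_erase.mpr ⟨hjln, Finset.mem_univ _⟩
      rw [← Finset.mul_prod_erase _ a hll, hT, Finset.erase_right_comm]
      ring
    have hprod : (∏ i, a i) = a ln * α := by
      rw [hα]; exact (Finset.mul_prod_erase _ a hmem).symm
    have hsplit := (Finset.add_sum_erase Finset.univ
      (fun j => b j * ∏ i ∈ Finset.univ.erase j, a i) hmem).symm
    rw [hsplit, hprod] at h
    rw [Finset.sum_congr rfl h2]
    conv_lhs => rw [hα]
    exact h
  have hcard : (T.card : ℤ) = (n : ℤ) - 1 := by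
    rw [hT, Finset.card_erase_of_mem hmem, Finset.card_univ, Fintype.card_fin]
    have : (1:ℕ) ≤ n := hn
    push_cast [this]
    ring
  have hAsum : ∑ j ∈ T, a j * ∏ i ∈ T.erase j, a i = ((n:ℤ) - 1) * α := by
    have h3 : ∀ j ∈ T, a j * ∏ i ∈ T.erase j, a i = α := fun j hj => by
      rw [hα, Finset.mul_prod_erase _ a hj]
    rw [Finset.sum_congr rfl h3, Finset.sum_const, nsmul_eq_mul, hcard]
  have expand : ∑ j ∈ T, (a j - b j) * (α - a ln) * ∏ i ∈ T.erase j, a i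
      = (α - a ln) * (((n:ℤ)-1)*α - ∑ j ∈ T, b j * ∏ i ∈ T.erase j, a i) := by
    rw [← hAsum, mul_sub, Finset.mul_sum, Finset.mul_sum, ← Finset.sum_sub_distrib]
    apply Finset.sum_congr rfl
    intros; ring
  rw [expand]
  set S := ∑ j ∈ T, b j * ∏ i ∈ T.erase j, a i with hS
  apply mul_left_cancel₀ hane
  linear_combination (a ln - α) * key - α * hβ
end

section
/- For every nonnegative integer k, the number of representations of k·α as a nonnegative integer combination of c_1,…,c_{n−1} is the binomial coefficient C(k + n − 2, n − 2); that is, m(k·α) = C(k+n−2, n−2). -/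
/-- Let `n ≥ 3`, let `a_1,…,a_{n−1} ≥ 2` be pairwise coprime, let
`α = a_1⋯a_{n−1}`, `c_j = α/a_j`, and let `m(s)` denote the number of tuples
`(x_1,…,x_{n−1})` of nonnegative integers with `∑_j x_j·c_j = s`.  For every
nonnegative integer `k`, `m(k·α) = C(k+n−2, n−2)`. -/
theorem count_reps_of_multiple_of_alpha
    (n : ℕ) (hn : 3 ≤ n) (a : Fin (n - 1) → ℕ)
    (ha : ∀ j, 2 ≤ a j)
    (hcop : ∀ i j, i ≠ j → Nat.Coprime (a i) (a j))
    (α : ℕ) (hα : α = ∏ j, a j)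
    (c : Fin (n - 1) → ℕ) (hc : ∀ j, a j * c j = α)
    (m : ℕ → ℕ)
    (hm : ∀ s, m s = Set.ncard {x : Fin (n - 1) → ℕ | ∑ j, x j * c j = s})
    (k : ℕ) :
    m (k * α) = Nat.choose (k + n - 2) (n - 2) := by
  classical
  have ha0 : ∀ j, 0 < a j := fun j => lt_of_lt_of_le (by norm_num) (ha j)
  have hα0 : 0 < α := by
    rw [hα]; exact Finset.prod_pos fun j _ => ha0 j
  have hci : ∀ i, c i = ∏ j ∈ Finset.univ.erase i, a j := by
    intro i
    have h1 : a i * c i = a i * ∏ j ∈ Finset.univ.erase i, a j := by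
      rw [hc i, hα, Finset.mul_prod_erase _ _ (Finset.mem_univ i)]
    exact Nat.eq_of_mul_eq_mul_left (ha0 i) h1
  have hcopc : ∀ i, Nat.Coprime (a i) (c i) := by
    intro i
    rw [hci]
    exact Nat.Coprime.prod_right fun j hj =>
      hcop i j (fun h => (Finset.mem_erase.mp hj).1 h.symm)
  have hdvdc : ∀ i j, i ≠ j → a i ∣ c j := by
    intro i j hij
    rw [hci]
    exact Finset.dvd_prod_of_mem a (Finset.mem_erase.mpr ⟨hij, Finset.mem_univ i⟩)
  have hset : {x : Fin (n - 1) → ℕ | ∑ j, x j * c j = k * α}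
      = (fun y : Fin (n - 1) → ℕ => fun j => a j * y j) '' {y | ∑ j, y j = k} := by
    ext x
    simp only [Set.mem_setOf_eq, Set.mem_image]
    constructor
    · intro hx
      have hdvd : ∀ i, a i ∣ x i := by
        intro i
        have h1 : a i ∣ ∑ j, x j * c j := by
          rw [hx]
          exact Dvd.dvd.mul_left ⟨c i, (hc i).symm⟩ k
        have hsplit : ∑ j, x j * c j
            = x i * c i + ∑ j ∈ Finset.univ.erase i, x j * c j :=
          (Finset.add_sum_erase _ _ (Finset.mem_univ i)).symm
        have h2 : a i ∣ ∑ j ∈ Finset.univ.erase i, x j * c j :=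
          Finset.dvd_sum fun j hj =>
            Dvd.dvd.mul_left (hdvdc i j (fun h => (Finset.mem_erase.mp hj).1 h.symm)) _
        have h3 : a i ∣ x i * c i := by
          have := hsplit ▸ h1
          exact (Nat.dvd_add_right h2).mp (by rwa [add_comm] at this)
        exact (Nat.Coprime.dvd_of_dvd_mul_right (hcopc i) h3)
      have hx' : ∀ j, a j * (x j / a j) = x j := fun j => Nat.mul_div_cancel' (hdvd j)
      refine ⟨fun j => x j / a j, ?_, funext fun j => hx' j⟩
      have hsum : (∑ j, x j / a j) * α = k * α := by
        rw [Finset.sum_mul]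
        calc ∑ j, (x j / a j) * α = ∑ j, x j * c j := by
              refine Finset.sum_congr rfl fun j _ => ?_
              rw [← hc j, ← mul_assoc, Nat.div_mul_cancel (hdvd j)]
          _ = k * α := hx
      exact Nat.eq_of_mul_eq_mul_right hα0 hsum
    · rintro ⟨y, hy, rfl⟩
      calc ∑ j, a j * y j * c j = ∑ j, y j * (a j * c j) := by
            refine Finset.sum_congr rfl fun j _ => ?_; ring
        _ = (∑ j, y j) * α := by
            rw [Finset.sum_mul]
            exact Finset.sum_congr rfl fun j _ => by rw [hc j]
        _ = k * α := by rw [hy]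
  have hinj : Function.Injective fun y : Fin (n - 1) → ℕ => fun j => a j * y j := by
    intro y z h
    funext j
    exact Nat.eq_of_mul_eq_mul_left (ha0 j) (congr_fun h j)
  rw [hm, hset, Set.ncard_image_of_injective _ hinj]
  have hcoe : {y : Fin (n - 1) → ℕ | ∑ j, y j = k}
      = ↑(Finset.piAntidiag (Finset.univ : Finset (Fin (n - 1))) k) := by
    ext y
    simp [Finset.mem_piAntidiag]
  rw [hcoe, Set.ncard_coe_finset]
  have hcard : (Finset.piAntidiag (Finset.univ : Finset (Fin (n - 1))) k).card
      = Nat.multichoose (n - 1) k := by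
    rw [← Finset.map_sym_eq_piAntidiag, Finset.card_map, Finset.sym_univ,
      Finset.card_univ, Sym.card_sym_eq_multichoose, Fintype.card_fin]
  rw [hcard, Nat.multichoose_eq]
  have h1 : n - 1 + k - 1 = k + n - 2 := by omega
  rw [h1]
  have hk : k ≤ k + n - 2 := by omega
  have h2 : k + n - 2 - k = n - 2 := by omega
  rw [← Nat.choose_symm hk, h2]
end

section
/- For a nonnegative integer s, one has m(s) ≥ 2 if and only if s ≥ α and s − α ∈ S (i.e., s = s' + α for some s' ∈ S). -/
/-- With notation as in the semigroup context (`m(s)` counts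
representations `∑_j x_j·c_j = s`, and `S = {s : m(s) ≥ 1}`), for a
nonnegative integer `s` one has `m(s) ≥ 2` if and only if `s ≥ α` and
`s − α ∈ S`. -/
theorem count_reps_ge_two_iff
    (n : ℕ) (hn : 3 ≤ n) (a : Fin (n - 1) → ℕ)
    (ha : ∀ j, 2 ≤ a j)
    (hcop : ∀ i j, i ≠ j → Nat.Coprime (a i) (a j))
    (α : ℕ) (hα : α = ∏ j, a j)
    (c : Fin (n - 1) → ℕ) (hc : ∀ j, a j * c j = α)
    (m : ℕ → ℕ)
    (hm : ∀ s, m s = Set.ncard {x : Fin (n - 1) → ℕ | ∑ j, x j * c j = s})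
    (s : ℕ) :
    2 ≤ m s ↔ α ≤ s ∧ 1 ≤ m (s - α) := by
  have hn2 : 2 ≤ n - 1 := by omega
  have hapos : ∀ j, 0 < a j := fun j => lt_of_lt_of_le two_pos (ha j)
  have hαpos : 0 < α := by
    rw [hα]; exact Finset.prod_pos (fun j _ => hapos j)
  have hcpos : ∀ j, 0 < c j := by
    intro j
    rcases Nat.eq_zero_or_pos (c j) with h | h
    · exfalso; have := hc j; rw [h, mul_zero] at this; omega
    · exact h
  have hcval : ∀ j, c j = ∏ i ∈ Finset.univ.erase j, a i := by
    intro j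
    have h1 : a j * c j = a j * ∏ i ∈ Finset.univ.erase j, a i := by
      rw [hc j, hα, Finset.mul_prod_erase _ _ (Finset.mem_univ j)]
    exact Nat.eq_of_mul_eq_mul_left (hapos j) h1
  have hcop' : ∀ j, Nat.Coprime (a j) (c j) := by
    intro j
    rw [hcval j]
    exact Nat.Coprime.prod_right (fun i hi => hcop j i (Finset.ne_of_mem_erase hi).symm)
  have hdvd : ∀ i j, i ≠ j → a j ∣ c i := by
    intro i j hij
    rw [hcval i]
    exact Finset.dvd_prod_of_mem _ (Finset.mem_erase.mpr ⟨hij.symm, Finset.mem_univ j⟩)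
  have hfin : ∀ t : ℕ, {x : Fin (n-1) → ℕ | ∑ j, x j * c j = t}.Finite := by
    intro t
    apply Set.Finite.subset (Set.Finite.pi (fun j : Fin (n-1) => Set.finite_Iic t))
    intro x hx
    simp only [Set.mem_pi, Set.mem_univ, forall_true_left, Set.mem_Iic]
    intro j
    calc x j ≤ x j * c j := Nat.le_mul_of_pos_right _ (hcpos j)
    _ ≤ ∑ i, x i * c i :=
        Finset.single_le_sum (f := fun i => x i * c i) (fun i _ => Nat.zero_le _)
          (Finset.mem_univ j)
    _ = t := hx
  constructor
  · intro h2
    rw [hm s] at h2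
    obtain ⟨x, y, hx, hy, hxy⟩ := (Set.one_lt_ncard_iff (hfin s)).mp h2
    simp only [Set.mem_setOf_eq] at hx hy
    clear h2
    -- key symmetric claim
    have main : ∀ x y : Fin (n-1) → ℕ, (∑ j, x j * c j = s) → (∑ j, y j * c j = s) →
        ∀ j, y j < x j → α ≤ s ∧ 1 ≤ m (s - α) := by
      intro x y hx hy j hj
      -- divisibility: a j ∣ x j - y j (in ℤ)
      have hdiff : (a j : ℤ) ∣ ((x j : ℤ) - y j) * c j := by
        have hsum : ∑ i, (x i : ℤ) * c i = ∑ i, (y i : ℤ) * c i := by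
          have := hx.trans hy.symm
          exact_mod_cast congrArg (Nat.cast : ℕ → ℤ) this
        have hx' : (x j : ℤ) * c j + ∑ i ∈ Finset.univ.erase j, (x i : ℤ) * c i
            = ∑ i, (x i : ℤ) * c i :=
          Finset.add_sum_erase _ (fun i => (x i : ℤ) * c i) (Finset.mem_univ j)
        have hy' : (y j : ℤ) * c j + ∑ i ∈ Finset.univ.erase j, (y i : ℤ) * c i
            = ∑ i, (y i : ℤ) * c i :=
          Finset.add_sum_erase _ (fun i => (y i : ℤ) * c i) (Finset.mem_univ j)
        have heq : ((x j : ℤ) - y j) * c j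
            = ∑ i ∈ Finset.univ.erase j, ((y i : ℤ) - x i) * c i := by
          have : (x j : ℤ) * c j + ∑ i ∈ Finset.univ.erase j, (x i : ℤ) * c i
              = (y j : ℤ) * c j + ∑ i ∈ Finset.univ.erase j, (y i : ℤ) * c i := by
            rw [hx', hy', hsum]
          have hsplit : ∑ i ∈ Finset.univ.erase j, ((y i : ℤ) - x i) * c i
              = (∑ i ∈ Finset.univ.erase j, (y i : ℤ) * c i)
              - ∑ i ∈ Finset.univ.erase j, (x i : ℤ) * c i := by
            rw [← Finset.sum_sub_distrib]
            exact Finset.sum_congr rfl (fun i _ => sub_mul _ _ _)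
          rw [hsplit]
          linarith
        rw [heq]
        apply Finset.dvd_sum
        intro i hi
        exact Dvd.dvd.mul_left
          (Int.natCast_dvd_natCast.mpr (hdvd i j (Finset.ne_of_mem_erase hi))) _
      have hdvdj : (a j : ℤ) ∣ (x j : ℤ) - y j := by
        have : IsCoprime (a j : ℤ) (c j : ℤ) := Int.isCoprime_iff_gcd_eq_one.mpr (hcop' j)
        exact this.dvd_of_dvd_mul_right hdiff
      have hge : y j + a j ≤ x j := by
        have hpos : (0:ℤ) < (x j : ℤ) - y j := by push_cast; omega
        have h1 : (a j : ℤ) ≤ (x j : ℤ) - y j := Int.le_of_dvd hpos hdvdj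
        omega
      -- build representation of s - α
      classical
      set z : Fin (n-1) → ℕ := fun i => if i = j then x j - a j else x i with hz
      have hsz : ∑ i, z i * c i + α = s := by
        have h1 : ∑ i, z i * c i = z j * c j + ∑ i ∈ Finset.univ.erase j, z i * c i :=
          (Finset.add_sum_erase _ _ (Finset.mem_univ j)).symm
        have h2 : ∑ i ∈ Finset.univ.erase j, z i * c i
            = ∑ i ∈ Finset.univ.erase j, x i * c i := by
          apply Finset.sum_congr rfl
          intro i hi
          simp [hz, Finset.ne_of_mem_erase hi]
        have h3 : ∑ i, x i * c i = x j * c j + ∑ i ∈ Finset.univ.erase j, x i * c i :=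
          (Finset.add_sum_erase _ _ (Finset.mem_univ j)).symm
        have hzj : z j = x j - a j := by simp [hz]
        have h4 : z j * c j + α = x j * c j := by
          have hle : a j ≤ x j := by omega
          have hsub : x j - a j + a j = x j := Nat.sub_add_cancel hle
          calc z j * c j + α = (x j - a j) * c j + a j * c j := by rw [hzj, hc j]
          _ = (x j - a j + a j) * c j := by ring
          _ = x j * c j := by rw [hsub]
        omega
      have hαs : α ≤ s := by omega
      refine ⟨hαs, ?_⟩
      rw [hm]
      exact (Set.ncard_pos (hfin _)).mpr ⟨z, by simp only [Set.mem_setOf_eq]; omega⟩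
    obtain ⟨j, hj⟩ := Function.ne_iff.mp hxy
    rcases Nat.lt_or_ge (y j) (x j) with h | h
    · exact main x y hx hy j h
    · exact main y x hy hx j (by omega)
  · rintro ⟨hαs, h1⟩
    rw [hm] at h1
    have hne : {x : Fin (n-1) → ℕ | ∑ j, x j * c j = s - α}.Nonempty := by
      by_contra h
      rw [Set.not_nonempty_iff_eq_empty] at h
      rw [h, Set.ncard_empty] at h1
      omega
    obtain ⟨y, hy⟩ := hne
    simp only [Set.mem_setOf_eq] at hy
    clear h1
    classical
    have h0 : 0 < n - 1 := by omega
    have h1' : 1 < n - 1 := by omega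
    set j0 : Fin (n-1) := ⟨0, h0⟩ with hj0
    set j1 : Fin (n-1) := ⟨1, h1'⟩ with hj1
    have hrep : ∀ j : Fin (n-1),
        ∑ i, (fun i => if i = j then y j + a j else y i) i * c i = s := by
      intro j
      have h1 : ∑ i, (fun i => if i = j then y j + a j else y i) i * c i
          = (y j + a j) * c j + ∑ i ∈ Finset.univ.erase j, y i * c i := by
        rw [← Finset.add_sum_erase _ (fun i => (if i = j then y j + a j else y i) * c i)
          (Finset.mem_univ j)]
        simp only [if_pos rfl]
        congr 1
        apply Finset.sum_congr rfl
        intro i hi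
        simp [Finset.ne_of_mem_erase hi]
      have h3 : ∑ i, y i * c i = y j * c j + ∑ i ∈ Finset.univ.erase j, y i * c i :=
        (Finset.add_sum_erase _ _ (Finset.mem_univ j)).symm
      have h4 : (y j + a j) * c j = y j * c j + α := by rw [Nat.add_mul, hc j]
      omega
    rw [hm]
    apply (Set.one_lt_ncard_iff (hfin s)).mpr
    have h01 : j0 ≠ j1 := by
      intro h'
      have := congrArg Fin.val h'
      rw [hj0, hj1] at this
      simp at this
    refine ⟨(fun i => if i = j0 then y j0 + a j0 else y i),
      (fun i => if i = j1 then y j1 + a j1 else y i), hrep j0, hrep j1, ?_⟩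
    intro h
    have hcf := congrFun h j0
    rw [if_pos rfl, if_neg h01] at hcf
    have := ha j0
    omega
end

section
/- No two distinct elements of S_* are congruent modulo α: if s, s' ∈ S_* and s ≡ s' (mod α), then s = s'. -/
theorem unique_rep_aux
    (n : ℕ) (hn : 3 ≤ n) (a : Fin (n - 1) → ℕ)
    (ha : ∀ j, 2 ≤ a j)
    (α : ℕ) (hαpos : 0 < α)
    (c : Fin (n - 1) → ℕ) (hc : ∀ j, a j * c j = α)
    (m : ℕ → ℕ)
    (hm : ∀ s, m s = Set.ncard {x : Fin (n - 1) → ℕ | ∑ j, x j * c j = s})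
    (s s' : ℕ) (hs : m s = 1) (hs' : m s' = 1)
    (hmod : s ≡ s' [MOD α]) (hle : s ≤ s') : s = s' := by
  by_contra hne
  have hlt : s < s' := lt_of_le_of_ne hle hne
  obtain ⟨k, hk⟩ := (Nat.modEq_iff_dvd' hle).mp hmod
  have hkpos : 0 < k := by
    rcases Nat.eq_zero_or_pos k with h | h
    · simp [h] at hk; omega
    · exact h
  rw [hm s, Set.ncard_eq_one] at hs
  obtain ⟨x, hx⟩ := hs
  have hxs : ∑ j, x j * c j = s := by
    have hmem : x ∈ ({x} : Set (Fin (n - 1) → ℕ)) := rfl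
    rw [← hx] at hmem
    exact hmem
  rw [hm s', Set.ncard_eq_one] at hs'
  obtain ⟨z, hz⟩ := hs'
  set i0 : Fin (n - 1) := ⟨0, by omega⟩ with hi0
  set i1 : Fin (n - 1) := ⟨1, by omega⟩ with hi1
  have hne01 : i0 ≠ i1 := by simp [hi0, hi1, Fin.ext_iff]
  have key : ∀ i : Fin (n - 1),
      (fun j => x j + if j = i then k * a i else 0) ∈
        {x : Fin (n - 1) → ℕ | ∑ j, x j * c j = s'} := by
    intro i
    simp only [Set.mem_setOf_eq, add_mul, Finset.sum_add_distrib, hxs]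
    have hsum : ∑ j, (if j = i then k * a i else 0) * c j = k * α := by
      rw [Finset.sum_eq_single i]
      · simp [mul_assoc, hc i]
      · intro b _ hb
        simp [hb]
      · simp
    have hmk : k * α = α * k := mul_comm _ _
    omega
  have h0 := key i0
  have h1 := key i1
  rw [hz, Set.mem_singleton_iff] at h0 h1
  have e0 := congrFun h0 i0
  have e1 := congrFun h1 i0
  simp [hne01] at e0 e1
  have ha0 := ha i0
  have : 0 < k * a i0 := Nat.mul_pos hkpos (by omega)
  omega

/-- With notation as in the semigroup context (`m(s)` counts
representations `∑_j x_j·c_j = s`, and `S_* = {s : m(s) = 1}`), no two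
distinct elements of `S_*` are congruent modulo `α`: if `s, s' ∈ S_*` and
`s ≡ s' (mod α)`, then `s = s'`. -/
theorem unique_rep_elements_incongruent_mod_alpha
    (n : ℕ) (hn : 3 ≤ n) (a : Fin (n - 1) → ℕ)
    (ha : ∀ j, 2 ≤ a j)
    (hcop : ∀ i j, i ≠ j → Nat.Coprime (a i) (a j))
    (α : ℕ) (hα : α = ∏ j, a j)
    (c : Fin (n - 1) → ℕ) (hc : ∀ j, a j * c j = α)
    (m : ℕ → ℕ)
    (hm : ∀ s, m s = Set.ncard {x : Fin (n - 1) → ℕ | ∑ j, x j * c j = s})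
    (s s' : ℕ) (hs : m s = 1) (hs' : m s' = 1)
    (hmod : s ≡ s' [MOD α]) :
    s = s' := by
  have hαpos : 0 < α := by
    rw [hα]
    exact Finset.prod_pos fun j _ => by have := ha j; omega
  rcases le_total s s' with h | h
  · exact unique_rep_aux n hn a ha α hαpos c hc m hm s s' hs hs' hmod h
  · exact (unique_rep_aux n hn a ha α hαpos c hc m hm s' s hs' hs hmod.symm h).symm
end

section
/- In the ring of formal power series ℤ[[t]], one has ∏_{j=1}^{n−1} (1 − t^{c_j}) · (∑_{s ∈ S_*} t^s) = (1 − t^α)^{n−1}; equivalently, 1/∏_{j=1}^{n−1}(1 − t^{c_j}) = (1 − t^α)^{−(n−1)} · ∑_{s ∈ S_*} t^s. -/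
/-- In `ℤ[[t]]`, one has
`∏_{j=1}^{n−1} (1 − t^{c_j}) · (∑_{s ∈ S_*} t^s) = (1 − t^α)^{n−1}`,
where `S_* = {s : m(s) = 1}` is the set of semigroup elements with a unique
representation `∑_j x_j·c_j = s`. -/
theorem prod_one_sub_pow_mul_unique_rep_series
    (n : ℕ) (hn : 3 ≤ n) (a : Fin (n - 1) → ℕ)
    (ha : ∀ j, 2 ≤ a j)
    (hcop : ∀ i j, i ≠ j → Nat.Coprime (a i) (a j))
    (α : ℕ) (hα : α = ∏ j, a j)
    (c : Fin (n - 1) → ℕ) (hc : ∀ j, a j * c j = α)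
    (m : ℕ → ℕ)
    (hm : ∀ s, m s = Set.ncard {x : Fin (n - 1) → ℕ | ∑ j, x j * c j = s}) :
    (∏ j, (1 - (PowerSeries.X : PowerSeries ℤ) ^ (c j))) *
      PowerSeries.mk (fun s => if m s = 1 then (1 : ℤ) else 0)
      = (1 - (PowerSeries.X : PowerSeries ℤ) ^ α) ^ (n - 1) := by
  have hapos : ∀ j, 0 < a j := fun j => lt_of_lt_of_le two_pos (ha j)
  have hαpos : 0 < α := by
    rw [hα]; exact Finset.prod_pos fun j _ => hapos j
  -- value of c j as a product
  have hcval : ∀ j, c j = ∏ i ∈ Finset.univ.erase j, a i := by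
    intro j
    have h1 : a j * c j = a j * ∏ i ∈ Finset.univ.erase j, a i := by
      rw [hc, hα, Finset.mul_prod_erase _ _ (Finset.mem_univ j)]
    exact Nat.eq_of_mul_eq_mul_left (hapos j) h1
  have hdvd : ∀ i j, i ≠ j → a i ∣ c j := by
    intro i j hij
    rw [hcval]
    exact Finset.dvd_prod_of_mem _ (Finset.mem_erase.2 ⟨hij, Finset.mem_univ i⟩)
  have hcop' : ∀ j, Nat.Coprime (c j) (a j) := by
    intro j
    rw [hcval]
    exact Nat.Coprime.prod_left fun i hi => hcop i j (Finset.mem_erase.1 hi).1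
  -- any representation of s is congruent to s mod each a j
  have hmod : ∀ (s : ℕ) (x : Fin (n - 1) → ℕ), (∑ j, x j * c j = s) →
      ∀ j, s ≡ x j * c j [MOD a j] := by
    intro s x hx j
    have hsplit : ∑ i, x i * c i = x j * c j + ∑ i ∈ Finset.univ.erase j, x i * c i :=
      (Finset.add_sum_erase _ _ (Finset.mem_univ j)).symm
    have hdv : a j ∣ ∑ i ∈ Finset.univ.erase j, x i * c i :=
      Finset.dvd_sum fun i hi =>
        Dvd.dvd.mul_left (hdvd j i (Ne.symm (Finset.mem_erase.1 hi).1)) (x i)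
    have h0 : (∑ i ∈ Finset.univ.erase j, x i * c i) ≡ 0 [MOD a j] :=
      (Nat.modEq_zero_iff_dvd).2 hdv
    calc s = x j * c j + ∑ i ∈ Finset.univ.erase j, x i * c i := by rw [← hx, hsplit]
      _ ≡ x j * c j + 0 [MOD a j] := Nat.ModEq.add_left _ h0
      _ = x j * c j := by rw [add_zero]
  -- uniqueness: a bounded representation is the only representation
  have hU : ∀ (s : ℕ) (x y : Fin (n - 1) → ℕ), (∀ j, x j < a j) →
      (∑ j, x j * c j = s) → (∑ j, y j * c j = s) → y = x := by
    intro s x y hb hx hy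
    have hyx : ∀ j, y j = a j * (y j / a j) + x j := by
      intro j
      have h1 : y j * c j ≡ x j * c j [MOD a j] :=
        (hmod s y hy j).symm.trans (hmod s x hx j)
      have h2 : y j ≡ x j [MOD a j] := h1.cancel_right_of_coprime ((hcop' j).symm)
      have h3 : y j % a j = x j := by
        rw [Nat.ModEq] at h2
        rw [h2, Nat.mod_eq_of_lt (hb j)]
      conv_lhs => rw [← Nat.div_add_mod (y j) (a j)]
      rw [h3]
    have hsum : ∑ j, y j * c j = α * (∑ j, y j / a j) + s := by
      calc ∑ j, y j * c j = ∑ j, (α * (y j / a j) + x j * c j) := by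
            refine Finset.sum_congr rfl fun j _ => ?_
            calc y j * c j = (a j * (y j / a j) + x j) * c j := by rw [← hyx j]
              _ = a j * c j * (y j / a j) + x j * c j := by ring
              _ = α * (y j / a j) + x j * c j := by rw [hc j]
        _ = α * (∑ j, y j / a j) + s := by
            rw [Finset.sum_add_distrib, ← Finset.mul_sum, hx]
    have hZ : (∑ j, y j / a j) = 0 := by
      rw [hy] at hsum
      rcases Nat.mul_eq_zero.mp (by omega : α * (∑ j, y j / a j) = 0) with h | h <;> omega
    funext j
    have hj0 : y j / a j = 0 := by
      have := (Finset.sum_eq_zero_iff).1 hZ j (Finset.mem_univ j)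
      exact this
    rw [hyx j, hj0, Nat.mul_zero, Nat.zero_add]
  -- key characterization of m s = 1
  have key : ∀ s : ℕ, m s = 1 ↔
      ∃ x ∈ Fintype.piFinset (fun j => Finset.range (a j)), ∑ j, x j * c j = s := by
    intro s
    constructor
    · intro hms
      rw [hm s, Set.ncard_eq_one] at hms
      obtain ⟨x₀, hx₀⟩ := hms
      have hx₀mem : ∑ j, x₀ j * c j = s := by
        have : x₀ ∈ {x : Fin (n - 1) → ℕ | ∑ j, x j * c j = s} := by
          rw [hx₀]; exact rfl
        exact this
      refine ⟨x₀, ?_, hx₀mem⟩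
      rw [Fintype.mem_piFinset]
      intro j
      rw [Finset.mem_range]
      by_contra hj
      push_neg at hj
      obtain ⟨i, hi⟩ := Fintype.exists_ne_of_one_lt_card
        (by rw [Fintype.card_fin]; omega) j
      set y : Fin (n - 1) → ℕ :=
        fun t => if t = j then x₀ j - a j else if t = i then x₀ t + a i else x₀ t with hydef
      have hterm : ∀ t, y t * c t + (if t = j then a j * c j else 0)
          = x₀ t * c t + (if t = i then a i * c i else 0) := by
        intro t
        by_cases h1 : t = j
        · subst h1
          have hti : t ≠ i := fun h => hi (h ▸ rfl)
          simp only [hydef, if_pos rfl, if_neg hti, if_true, eq_self_iff_true, add_zero]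
          rw [← add_mul, Nat.sub_add_cancel hj]
        · by_cases h2 : t = i
          · subst h2
            simp only [hydef, if_neg h1, if_pos rfl, if_true, eq_self_iff_true, add_zero]
            rw [add_mul]
          · simp only [hydef, if_neg h1, if_neg h2]
      have hsumeq : (∑ t, y t * c t) + a j * c j = (∑ t, x₀ t * c t) + a i * c i := by
        have h := Finset.sum_congr rfl (fun t (_ : t ∈ Finset.univ) => hterm t)
        simpa [Finset.sum_add_distrib, Finset.sum_ite_eq'] using h
      rw [hc j, hc i, hx₀mem] at hsumeq
      have hyrep : ∑ t, y t * c t = s := by omega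
      have hyx₀ : y = x₀ := by
        have : y ∈ {x : Fin (n - 1) → ℕ | ∑ j, x j * c j = s} := hyrep
        rw [hx₀] at this
        exact this
      have heqi := congrFun hyx₀ i
      simp only [hydef, if_neg hi, if_pos rfl, if_true, eq_self_iff_true] at heqi
      have hai := ha i
      omega
    · rintro ⟨x, hxT, hxs⟩
      rw [hm s, Set.ncard_eq_one]
      refine ⟨x, ?_⟩
      ext y
      simp only [Set.mem_setOf_eq, Set.mem_singleton_iff]
      constructor
      · intro hy
        exact hU s x y
          (fun j => Finset.mem_range.1 (Fintype.mem_piFinset.1 hxT j)) hxs hy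
      · rintro rfl; exact hxs
  -- the counting function of bounded representations
  have hcard : ∀ s : ℕ,
      ((Fintype.piFinset (fun j => Finset.range (a j))).filter
        (fun x => ∑ j, x j * c j = s)).card = if m s = 1 then 1 else 0 := by
    intro s
    by_cases hms : m s = 1
    · rw [if_pos hms]
      obtain ⟨x, hxT, hxs⟩ := (key s).1 hms
      rw [Finset.card_eq_one]
      refine ⟨x, ?_⟩
      ext y
      simp only [Finset.mem_filter, Finset.mem_singleton]
      constructor
      · rintro ⟨hyT, hys⟩
        exact hU s x y
          (fun j => Finset.mem_range.1 (Fintype.mem_piFinset.1 hxT j)) hxs hys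
      · rintro rfl; exact ⟨hxT, hxs⟩
    · rw [if_neg hms, Finset.card_eq_zero, Finset.filter_eq_empty_iff]
      exact fun {y} hyT hys => hms ((key s).2 ⟨y, hyT, hys⟩)
  -- the unique-representation series as a finite sum of monomials
  have hF : PowerSeries.mk (fun s => if m s = 1 then (1 : ℤ) else 0)
      = ∑ x ∈ Fintype.piFinset (fun j => Finset.range (a j)),
          (PowerSeries.X : PowerSeries ℤ) ^ (∑ j, x j * c j) := by
    ext s
    rw [PowerSeries.coeff_mk, map_sum]
    simp only [PowerSeries.coeff_X_pow]
    rw [Finset.sum_boole]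
    have hfil : (Fintype.piFinset (fun j => Finset.range (a j))).filter
          (fun x => s = ∑ j, x j * c j)
        = (Fintype.piFinset (fun j => Finset.range (a j))).filter
          (fun x => ∑ j, x j * c j = s) :=
      Finset.filter_congr fun x _ => eq_comm
    rw [hfil, hcard s]
    split_ifs <;> simp
  rw [hF]
  -- rewrite the sum of monomials as a product of geometric sums
  have hF2 : (∑ x ∈ Fintype.piFinset (fun j => Finset.range (a j)),
        (PowerSeries.X : PowerSeries ℤ) ^ (∑ j, x j * c j))
      = ∏ j, ∑ i ∈ Finset.range (a j), ((PowerSeries.X : PowerSeries ℤ) ^ (c j)) ^ i := by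
    rw [Finset.prod_univ_sum]
    refine Finset.sum_congr rfl fun x _ => ?_
    rw [← Finset.prod_pow_eq_pow_sum]
    refine Finset.prod_congr rfl fun j _ => ?_
    rw [← pow_mul, mul_comm]
  rw [hF2, ← Finset.prod_mul_distrib]
  have hgeo : ∀ j, (1 - (PowerSeries.X : PowerSeries ℤ) ^ (c j)) *
      ∑ i ∈ Finset.range (a j), ((PowerSeries.X : PowerSeries ℤ) ^ (c j)) ^ i
      = 1 - (PowerSeries.X : PowerSeries ℤ) ^ α := by
    intro j
    have h := geom_sum_mul ((PowerSeries.X : PowerSeries ℤ) ^ (c j)) (a j)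
    have h2 : (1 - (PowerSeries.X : PowerSeries ℤ) ^ (c j)) *
        ∑ i ∈ Finset.range (a j), ((PowerSeries.X : PowerSeries ℤ) ^ (c j)) ^ i
        = 1 - ((PowerSeries.X : PowerSeries ℤ) ^ (c j)) ^ (a j) := by
      linear_combination -h
    rw [h2, ← pow_mul, mul_comm (c j), hc j]
  rw [Finset.prod_congr rfl fun j _ => hgeo j, Finset.prod_const,
    Finset.card_univ, Fintype.card_fin]
end

section
/- The polynomial ∏_{j=1}^{n−1}(1 − t^{c_j}) divides the polynomial (1 − t^α)^{n−2}·(1 − t) in the polynomial ring ℤ[t]. -/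
open Polynomial Finset

private lemma Xpow_dvd {m M : ℕ} (h : m ∣ M) : ((X : ℤ[X]) ^ m - 1) ∣ (X ^ M - 1) := by
  obtain ⟨t, rfl⟩ := h
  simpa [pow_mul] using sub_dvd_pow_sub_pow ((X:ℤ[X])^m) 1 t


private lemma divisors_gcd' (m k : ℕ) (hm : m ≠ 0) (hk : k ≠ 0) :
    (Nat.gcd m k).divisors = m.divisors ∩ k.divisors := by
  ext d
  simp [Nat.mem_divisors, Nat.dvd_gcd_iff, hm, hk, Nat.gcd_eq_zero_iff]

private lemma pair_dvd {m k : ℕ} (hm : 0 < m) (hk : 0 < k) :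
    ((X : ℤ[X]) ^ m - 1) * (X ^ k - 1) ∣
      (X ^ (Nat.lcm m k) - 1) * (X ^ (Nat.gcd m k) - 1) := by
  have hl : 0 < Nat.lcm m k := Nat.pos_of_ne_zero (Nat.lcm_ne_zero hm.ne' hk.ne')
  have hg : 0 < Nat.gcd m k := Nat.gcd_pos_of_pos_left _ hm
  rw [← Polynomial.prod_cyclotomic_eq_X_pow_sub_one hm ℤ,
      ← Polynomial.prod_cyclotomic_eq_X_pow_sub_one hk ℤ,
      ← Polynomial.prod_cyclotomic_eq_X_pow_sub_one hl ℤ,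
      ← Polynomial.prod_cyclotomic_eq_X_pow_sub_one hg ℤ,
      ← Finset.prod_union_inter, ← divisors_gcd' m k hm.ne' hk.ne']
  refine mul_dvd_mul (Finset.prod_dvd_prod_of_subset _ _ _ ?_) dvd_rfl
  intro d hd
  rcases Finset.mem_union.1 hd with h | h <;>
    rw [Nat.mem_divisors] at h ⊢ <;>
    exact ⟨h.1.trans (by first | exact Nat.dvd_lcm_left m k | exact Nat.dvd_lcm_right m k), hl.ne'⟩

private lemma main_aux {ι : Type*} [DecidableEq ι] (m : ι → ℕ) :
    ∀ (s : Finset ι), s.Nonempty → (∀ i ∈ s, 0 < m i) →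
    (∏ j ∈ s, ((X : ℤ[X]) ^ m j - 1)) ∣
      (X ^ (s.lcm m) - 1) ^ (s.card - 1) * (X ^ (s.gcd m) - 1) := by
  intro s
  induction s using Finset.cons_induction with
  | empty => intro h; simp at h
  | cons i s hi IH =>
    intro _ hm
    rcases s.eq_empty_or_nonempty with rfl | hs'
    · simp
    · have hmi : 0 < m i := hm i (Finset.mem_cons_self i s)
      have hms : ∀ j ∈ s, 0 < m j := fun j hj => hm j (Finset.mem_cons_of_mem hj)
      have hG : 0 < s.gcd m := by
        rcases hs' with ⟨j, hj⟩
        rcases Nat.eq_zero_or_pos (s.gcd m) with h0 | h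
        · exact absurd ((Finset.gcd_eq_zero_iff).1 h0 j hj) (hms j hj).ne'
        · exact h
      set L' := (Finset.cons i s hi).lcm m with hL'
      have hLs : s.lcm m ∣ L' := Finset.lcm_dvd fun j hj => Finset.dvd_lcm (Finset.mem_cons_of_mem hj)
      have hLig : Nat.lcm (m i) (s.gcd m) ∣ L' := by
        refine Nat.lcm_dvd (Finset.dvd_lcm (Finset.mem_cons_self i s)) ?_
        rcases hs' with ⟨j, hj⟩
        exact (Finset.gcd_dvd hj).trans (Finset.dvd_lcm (Finset.mem_cons_of_mem hj))
      have hGc : (Finset.cons i s hi).gcd m = Nat.gcd (m i) (s.gcd m) := by rw [Finset.cons_eq_insert, Finset.gcd_insert]; rfl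
      have hcard : (Finset.cons i s hi).card - 1 = s.card := by
        rw [Finset.card_cons]; omega
      rw [Finset.prod_cons, hcard, hGc]
      calc ((X : ℤ[X]) ^ m i - 1) * ∏ j ∈ s, ((X:ℤ[X]) ^ m j - 1)
          ∣ ((X : ℤ[X]) ^ m i - 1) *
            ((X ^ (s.lcm m) - 1) ^ (s.card - 1) * (X ^ (s.gcd m) - 1)) :=
            mul_dvd_mul_left _ (IH hs' hms)
        _ = (X ^ (s.lcm m) - 1) ^ (s.card - 1) *
            (((X:ℤ[X]) ^ m i - 1) * (X ^ (s.gcd m) - 1)) := by ring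
        _ ∣ (X ^ L' - 1) ^ (s.card - 1) *
            ((X ^ (Nat.lcm (m i) (s.gcd m)) - 1) * (X ^ (Nat.gcd (m i) (s.gcd m)) - 1)) :=
            mul_dvd_mul (pow_dvd_pow_of_dvd (Xpow_dvd hLs) _) (pair_dvd hmi hG)
        _ ∣ (X ^ L' - 1) ^ (s.card - 1) *
            ((X ^ L' - 1) * (X ^ (Nat.gcd (m i) (s.gcd m)) - 1)) :=
            mul_dvd_mul_left _ (mul_dvd_mul (Xpow_dvd hLig) dvd_rfl)
        _ = (X ^ L' - 1) ^ (s.card - 1 + 1) * (X ^ (Nat.gcd (m i) (s.gcd m)) - 1) := by ring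
        _ = (X ^ L' - 1) ^ s.card * (X ^ (Nat.gcd (m i) (s.gcd m)) - 1) := by
            congr 2
            rcases hs' with ⟨j, hj⟩
            have := Finset.card_pos.2 ⟨j, hj⟩
            omega

/-- The polynomial `∏_{j=1}^{n−1}(1 − t^{c_j})` divides the
polynomial `(1 − t^α)^{n−2}·(1 − t)` in `ℤ[t]`. -/
theorem prod_one_sub_pow_dvd
    (n : ℕ) (hn : 3 ≤ n) (a : Fin (n - 1) → ℕ)
    (ha : ∀ j, 2 ≤ a j)
    (hcop : ∀ i j, i ≠ j → Nat.Coprime (a i) (a j))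
    (α : ℕ) (hα : α = ∏ j, a j)
    (c : Fin (n - 1) → ℕ) (hc : ∀ j, a j * c j = α) :
    (∏ j, (1 - (Polynomial.X : Polynomial ℤ) ^ (c j))) ∣
      (1 - (Polynomial.X : Polynomial ℤ) ^ α) ^ (n - 2) *
        (1 - (Polynomial.X : Polynomial ℤ)) := by
  have hn1 : 0 < n - 1 := by omega
  have hα0 : 0 < α := by
    rw [hα]; exact Finset.prod_pos fun j _ => by have := ha j; omega
  have hc0 : ∀ j, 0 < c j := fun j => by
    have := hc j; have := ha j; nlinarith [hα0]
  -- c j = product of the others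
  have hcprod : ∀ i, c i = ∏ j ∈ Finset.univ.erase i, a j := by
    intro i
    have h1 : a i * c i = a i * ∏ j ∈ Finset.univ.erase i, a j := by
      rw [hc i, hα, Finset.mul_prod_erase _ _ (Finset.mem_univ i)]
    exact Nat.eq_of_mul_eq_mul_left (by have := ha i; omega) h1
  -- gcd of all c j is 1
  have hgcd : Finset.univ.gcd c = 1 := by
    by_contra hne
    obtain ⟨p, hp, hpd⟩ := Nat.exists_prime_and_dvd hne
    set i0 : Fin (n - 1) := ⟨0, hn1⟩
    have hpc0 : p ∣ c i0 := hpd.trans (Finset.gcd_dvd (Finset.mem_univ i0))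
    rw [hcprod] at hpc0
    obtain ⟨j, hj, hpj⟩ := hp.prime.exists_mem_finset_dvd hpc0
    have hji0 : j ≠ i0 := Finset.ne_of_mem_erase hj
    have hpcj : p ∣ c j := hpd.trans (Finset.gcd_dvd (Finset.mem_univ j))
    rw [hcprod] at hpcj
    obtain ⟨k, hk, hpk⟩ := hp.prime.exists_mem_finset_dvd hpcj
    have hkj : k ≠ j := Finset.ne_of_mem_erase hk
    have : p ∣ Nat.gcd (a j) (a k) := Nat.dvd_gcd hpj hpk
    rw [hcop j k (Ne.symm hkj)] at this
    exact hp.one_lt.ne' (Nat.eq_one_of_dvd_one this ▸ rfl) |>.elim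
  -- lcm divides α
  have hlcm : Finset.univ.lcm c ∣ α := Finset.lcm_dvd fun j _ => Dvd.intro_left (a j) (hc j)
  have huniv : (Finset.univ : Finset (Fin (n - 1))).Nonempty := ⟨⟨0, hn1⟩, Finset.mem_univ _⟩
  have hcard : (Finset.univ : Finset (Fin (n - 1))).card = n - 1 := by
    simp
  have key : (∏ j, ((X : ℤ[X]) ^ c j - 1)) ∣
      ((X : ℤ[X]) ^ α - 1) ^ (n - 2) * (X - 1) := by
    have h := main_aux c Finset.univ huniv fun j _ => hc0 j
    rw [hgcd, hcard] at h
    have h2 : n - 1 - 1 = n - 2 := by omega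
    rw [h2, pow_one] at h
    exact h.trans (mul_dvd_mul (pow_dvd_pow_of_dvd (Xpow_dvd hlcm) _) dvd_rfl)
  -- sign bookkeeping
  have e1 : (∏ j, (1 - (X : ℤ[X]) ^ (c j))) =
      (-1 : ℤ[X]) ^ (n - 1) * ∏ j, ((X : ℤ[X]) ^ c j - 1) := by
    calc (∏ j, (1 - (X : ℤ[X]) ^ (c j)))
        = ∏ j, (-1 * ((X : ℤ[X]) ^ c j - 1)) :=
          Finset.prod_congr rfl fun j _ => by ring
      _ = (∏ _j : Fin (n - 1), (-1 : ℤ[X])) * ∏ j, ((X : ℤ[X]) ^ c j - 1) :=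
          Finset.prod_mul_distrib
      _ = (-1 : ℤ[X]) ^ (n - 1) * ∏ j, ((X : ℤ[X]) ^ c j - 1) := by
          rw [Finset.prod_const, hcard]
  have e2 : (1 - (X : ℤ[X]) ^ α) ^ (n - 2) * (1 - X) =
      (-1 : ℤ[X]) ^ (n - 1) * (((X : ℤ[X]) ^ α - 1) ^ (n - 2) * (X - 1)) := by
    have h3 : n - 1 = (n - 2) + 1 := by omega
    rw [h3, pow_succ]
    have : (1 - (X : ℤ[X]) ^ α) = -1 * ((X:ℤ[X]) ^ α - 1) := by ring
    rw [this, mul_pow]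
    ring
  rw [e1, e2]
  exact mul_dvd_mul_left _ key
end

section
/- In the ring of formal power series ℤ[[t]], the Alexander polynomial Δ satisfies Δ(t)·(1 − t^α) = (1 − t)·∑_{s ∈ S_*} t^s. -/
/-!
Put `G_j = ∑_{k < a_j} t^{k c_j}`. Then `(1 - t^{c_j}) G_j = 1 - t^α`, so both sides of the
identity, multiplied by the unit `∏ (1 - t^{c_j})` of `ℤ[[t]]`, become
`(1 - t) (1 - t^α)^{n-1} = (1 - t) ∏ (1 - t^{c_j}) ∏ G_j`. The coefficient of `t^s` in `∏ G_j`
counts the representations `s = ∑ x_j c_j` with `x_j < a_j`. As `a_i ∣ c_j` for `i ≠ j` and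
`a_j` is prime to `c_j`, reduction modulo the `a_j` shows there is at most one such
representation, and that it is then the only representation of `s`. Conversely, if some
representation has `x_j ≥ a_j`, trading `a_j c_j = α` for `a_i c_i` gives a second one.
-/

open Finset PowerSeries Function

theorem Nat.Coprime.dvd_of_mul_eq_mul {a b c d : ℕ} (hab : a.Coprime b) (h : a * c = b * d) :
    a ∣ d :=
  hab.dvd_of_dvd_mul_left ⟨c, h.symm⟩

variable {ι : Type*} [Fintype ι] {a c : ι → ℕ}

theorem coprime_of_mul_eq_prod [DecidableEq ι] (hcop : Pairwise (Nat.Coprime on a)) {j : ι}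
    (ha : 0 < a j) (hc : a j * c j = ∏ i, a i) : (a j).Coprime (c j) := by
  have hcj : c j = ∏ i ∈ univ.erase j, a i := by
    rw [← mul_prod_erase _ _ (mem_univ j)] at hc
    exact Nat.eq_of_mul_eq_mul_left ha hc
  exact hcj ▸ Nat.Coprime.prod_right fun i hi => hcop (ne_of_mem_erase hi).symm

theorem dotProduct_modEq [DecidableEq ι] {j : ι} (hdvd : ∀ i, i ≠ j → a j ∣ c i)
    (x : ι → ℕ) : x ⬝ᵥ c ≡ x j * c j [MOD a j] := by
  have hrest : a j ∣ ∑ i ∈ univ.erase j, x i * c i :=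
    dvd_sum fun i hi => dvd_mul_of_dvd_right (hdvd i (ne_of_mem_erase hi)) _
  rw [dotProduct, ← add_sum_erase _ _ (mem_univ j)]
  simpa using (Nat.ModEq.refl (x j * c j)).add (Nat.modEq_zero_iff_dvd.2 hrest)

theorem modEq_of_dotProduct_eq [DecidableEq ι] {j : ι} (hdvd : ∀ i, i ≠ j → a j ∣ c i)
    (hac : (a j).Coprime (c j)) {x y : ι → ℕ} (h : x ⬝ᵥ c = y ⬝ᵥ c) :
    x j ≡ y j [MOD a j] :=
  Nat.ModEq.cancel_right_of_coprime hac <|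
    (dotProduct_modEq hdvd x).symm.trans (h ▸ dotProduct_modEq hdvd y)

theorem eq_of_le_of_dotProduct_eq (hc : ∀ j, 0 < c j) {x y : ι → ℕ} (hxy : x ≤ y)
    (h : x ⬝ᵥ c = y ⬝ᵥ c) : x = y := by
  have := (sum_eq_sum_iff_of_le fun j _ => Nat.mul_le_mul_right (c j) (hxy j)).1 h
  exact funext fun j => Nat.eq_of_mul_eq_mul_right (hc j) (this j (mem_univ j))

/-- Any other representation is congruent to `x` modulo each `a j`, hence dominates it
coordinatewise. -/
theorem eq_of_dotProduct_eq_of_lt [DecidableEq ι] (hdvd : ∀ i j, i ≠ j → a j ∣ c i)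
    (hac : ∀ j, (a j).Coprime (c j)) (hc : ∀ j, 0 < c j) {x y : ι → ℕ}
    (hx : ∀ j, x j < a j) (h : x ⬝ᵥ c = y ⬝ᵥ c) : x = y := by
  refine eq_of_le_of_dotProduct_eq hc (fun j => ?_) h
  have hmod : x j = y j % a j := by
    rw [← Nat.mod_eq_of_lt (hx j)]; exact modEq_of_dotProduct_eq (hdvd · j) (hac j) h
  exact hmod ▸ Nat.mod_le _ _

theorem exists_ne_dotProduct_eq [DecidableEq ι] {i j : ι} (hij : i ≠ j)
    (hc : a i * c i = a j * c j) (ha : 0 < a j) {y : ι → ℕ} (hy : a j ≤ y j) :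
    ∃ z : ι → ℕ, z ≠ y ∧ z ⬝ᵥ c = y ⬝ᵥ c := by
  have hle : (Pi.single j (a j) : ι → ℕ) ≤ y + Pi.single i (a i) := by
    intro k
    rcases eq_or_ne k j with rfl | hk
    · simpa [hij] using hy
    · simp [hk]
  set z : ι → ℕ := y + Pi.single i (a i) - Pi.single j (a j)
  have hz : z + Pi.single j (a j) = y + Pi.single i (a i) := tsub_add_cancel_of_le hle
  refine ⟨z, fun hzy => ?_, ?_⟩
  · rw [hzy] at hz
    have := congrFun (add_left_cancel hz) j
    rw [Pi.single_eq_same, Pi.single_eq_of_ne hij.symm] at this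
    omega
  · have := congrArg (· ⬝ᵥ c) hz
    simp only [add_dotProduct, single_dotProduct] at this
    omega

theorem ncard_dotProduct_eq_eq_one_iff [DecidableEq ι] [Nontrivial ι] {α s : ℕ}
    (hcop : Pairwise (Nat.Coprime on a)) (hc : ∀ j, a j * c j = α)
    (hac : ∀ j, (a j).Coprime (c j)) (hα : 0 < α) :
    {x : ι → ℕ | x ⬝ᵥ c = s}.ncard = 1 ↔
      ∃ x, (∀ j, x j < a j) ∧ x ⬝ᵥ c = s := by
  have ha : ∀ j, 0 < a j := fun j => Nat.pos_of_mul_pos_right ((hc j).symm ▸ hα)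
  have hc0 : ∀ j, 0 < c j := fun j => Nat.pos_of_mul_pos_left ((hc j).symm ▸ hα)
  have hdvd : ∀ i j, i ≠ j → a j ∣ c i :=
    fun i j hij => (hcop hij.symm).dvd_of_mul_eq_mul ((hc j).trans (hc i).symm)
  constructor
  · intro h
    obtain ⟨y, hy⟩ := Set.ncard_eq_one.1 h
    have hys : y ⬝ᵥ c = s := (Set.ext_iff.1 hy y).2 rfl
    refine ⟨y, fun j => ?_, hys⟩
    by_contra! hj
    obtain ⟨i, hij⟩ := exists_ne j
    obtain ⟨z, hzy, hz⟩ := exists_ne_dotProduct_eq hij ((hc i).trans (hc j).symm) (ha j) hj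
    exact hzy ((Set.ext_iff.1 hy z).1 (hz.trans hys))
  · rintro ⟨x, hx, hxs⟩
    refine Set.ncard_eq_one.2 ⟨x, Set.ext fun y => ⟨fun hy => ?_, fun hy => hy ▸ hxs⟩⟩
    exact (eq_of_dotProduct_eq_of_lt hdvd hac hc0 hx (hxs.trans hy.symm)).symm

theorem card_filter_piFinset_dotProduct_eq [DecidableEq ι] [Nontrivial ι] {α : ℕ}
    (hcop : Pairwise (Nat.Coprime on a)) (hc : ∀ j, a j * c j = α)
    (hac : ∀ j, (a j).Coprime (c j)) (hα : 0 < α) (s : ℕ) :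
    #{x ∈ Fintype.piFinset fun j => range (a j) | x ⬝ᵥ c = s} =
      if {x : ι → ℕ | x ⬝ᵥ c = s}.ncard = 1 then 1 else 0 := by
  split_ifs with h
  · obtain ⟨x, hx, hxs⟩ := (ncard_dotProduct_eq_eq_one_iff hcop hc hac hα).1 h
    obtain ⟨y, hy⟩ := Set.ncard_eq_one.1 h
    have hrep : ∀ z : ι → ℕ, z ⬝ᵥ c = s → z = y := fun z hz => (Set.ext_iff.1 hy z).1 hz
    refine card_eq_one.2 ⟨x, eq_singleton_iff_unique_mem.2 ⟨by simpa [hxs] using hx, ?_⟩⟩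
    exact fun z hz => (hrep z (mem_filter.1 hz).2).trans (hrep x hxs).symm
  · refine card_eq_zero.2 (filter_eq_empty_iff.2 fun x hx hxs => h ?_)
    rw [Fintype.mem_piFinset] at hx
    exact (ncard_dotProduct_eq_eq_one_iff hcop hc hac hα).2
      ⟨x, fun j => mem_range.1 (hx j), hxs⟩

theorem coeff_prod_geom_sum {R : Type*} [CommSemiring R] [DecidableEq ι] (a c : ι → ℕ)
    (s : ℕ) :
    coeff s (∏ j, ∑ k ∈ range (a j), (X : R⟦X⟧) ^ (k * c j)) =
      #{x ∈ Fintype.piFinset fun j => range (a j) | x ⬝ᵥ c = s} := by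
  rw [prod_univ_sum]
  simp_rw [prod_pow_eq_pow_sum, map_sum, coeff_X_pow, sum_boole, eq_comm (a := s)]
  rfl

theorem one_sub_pow_mul_geom_sum_pow {R : Type*} [CommRing R] (x : R) (a c : ℕ) :
    (1 - x ^ c) * ∑ k ∈ range a, x ^ (k * c) = 1 - x ^ (a * c) := by
  simp_rw [mul_comm _ c, pow_mul]
  exact mul_neg_geom_sum _ _

theorem isUnit_one_sub_X_pow {R : Type*} [CommRing R] {c : ℕ} (hc : c ≠ 0) :
    IsUnit (1 - X ^ c : R⟦X⟧) :=
  isUnit_iff_constantCoeff.2 (by simp [hc])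

/-- Let `Δ ∈ ℤ[t]` be the unsymmetrized Alexander polynomial of a
Seifert fiber, i.e. the quotient `(1 − t^α)^{n−2}(1 − t)/∏_j(1 − t^{c_j})`.
Then in `ℤ[[t]]` one has `Δ(t)·(1 − t^α) = (1 − t)·∑_{s ∈ S_*} t^s`, where
`S_* = {s : m(s) = 1}`. -/
theorem alexander_poly_mul_one_sub_pow_alpha
    (n : ℕ) (hn : 3 ≤ n) (a : Fin (n - 1) → ℕ)
    (ha : ∀ j, 2 ≤ a j)
    (hcop : ∀ i j, i ≠ j → Nat.Coprime (a i) (a j))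
    (α : ℕ) (hα : α = ∏ j, a j)
    (c : Fin (n - 1) → ℕ) (hc : ∀ j, a j * c j = α)
    (m : ℕ → ℕ)
    (hm : ∀ s, m s = Set.ncard {x : Fin (n - 1) → ℕ | ∑ j, x j * c j = s})
    (Δ : Polynomial ℤ)
    (hΔ : Δ * ∏ j, (1 - (Polynomial.X : Polynomial ℤ) ^ (c j))
        = (1 - (Polynomial.X : Polynomial ℤ) ^ α) ^ (n - 2) *
            (1 - (Polynomial.X : Polynomial ℤ))) :
    (Δ : PowerSeries ℤ) * (1 - (PowerSeries.X : PowerSeries ℤ) ^ α)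
      = (1 - (PowerSeries.X : PowerSeries ℤ)) *
          PowerSeries.mk (fun s => if m s = 1 then (1 : ℤ) else 0) := by
  have : Nontrivial (Fin (n - 1)) := Fin.nontrivial_iff_two_le.2 (by omega)
  have ha0 : ∀ j, 0 < a j := fun j => by linarith [ha j]
  have hα0 : 0 < α := hα ▸ prod_pos fun j _ => ha0 j
  have hac : ∀ j, (a j).Coprime (c j) :=
    fun j => coprime_of_mul_eq_prod hcop (ha0 j) ((hc j).trans hα)
  have hS : PowerSeries.mk (fun s => if m s = 1 then (1 : ℤ) else 0) =
      ∏ j, ∑ k ∈ range (a j), X ^ (k * c j) := by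
    ext s
    rw [coeff_mk, coeff_prod_geom_sum, card_filter_piFinset_dotProduct_eq hcop hc hac hα0, hm]
    push_cast
    rfl
  have hΔ' : (Δ : ℤ⟦X⟧) * ∏ j, (1 - X ^ c j) = (1 - X ^ α) ^ (n - 2) * (1 - X) := by
    simpa only [map_mul, map_prod, map_sub, map_pow, map_one, Polynomial.coe_X,
      Polynomial.coeToPowerSeries.ringHom_apply] using
      congrArg (Polynomial.coeToPowerSeries.ringHom (R := ℤ)) hΔ
  have hgeom : ∏ _j : Fin (n - 1), (1 - X ^ α : ℤ⟦X⟧) =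
      (∏ j, (1 - X ^ c j)) * ∏ j, ∑ k ∈ range (a j), X ^ (k * c j) := by
    rw [← prod_mul_distrib]
    exact prod_congr rfl fun j _ => by rw [one_sub_pow_mul_geom_sum_pow, hc]
  have hc0 : ∀ j, c j ≠ 0 := fun j => (Nat.pos_of_mul_pos_left ((hc j).symm ▸ hα0)).ne'
  refine (IsUnit.prod_univ_iff.2 fun j =>
    isUnit_one_sub_X_pow (R := ℤ) (hc0 j)).mul_left_injective ?_
  calc (Δ : ℤ⟦X⟧) * (1 - X ^ α) * ∏ j, (1 - X ^ c j)
      = (1 - X) * (1 - X ^ α) ^ (n - 2 + 1) := by rw [mul_right_comm, hΔ']; ring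
    _ = (1 - X) * ∏ _j : Fin (n - 1), (1 - X ^ α) := by
      rw [prod_const, card_univ, Fintype.card_fin, show n - 2 + 1 = n - 1 by omega]
    _ = (1 - X) * PowerSeries.mk (fun s => if m s = 1 then 1 else 0) * ∏ j, (1 - X ^ c j) := by
      rw [hgeom, hS]; ring
end

section
/- The Alexander polynomial Δ fails the Fox–Milnor condition: there do not exist a polynomial g ∈ ℤ[t], a nonnegative integer r, and a sign ε ∈ {1, −1} such that Δ(t) = ε·t^r·g(t)·g*(t), where g*(t) = t^{deg g}·g(1/t) denotes the reversal of g. -/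
open Polynomial

private lemma rev_pow' {R : Type*} [CommRing R] [NoZeroDivisors R] (p : R[X]) (k : ℕ) :
    (p ^ k).reverse = p.reverse ^ k := by
  induction k with
  | zero => rw [pow_zero, pow_zero, ← C_1, reverse_C]
  | succ k ih => rw [pow_succ, pow_succ, reverse_mul_of_domain, ih]

private lemma rm_dvd_le {R : Type*} [CommRing R] [IsDomain R] {p q : R[X]} (h : p ∣ q)
    (hq : q ≠ 0) (a : R) : rootMultiplicity a p ≤ rootMultiplicity a q := by
  rw [le_rootMultiplicity_iff hq]
  exact dvd_trans (pow_rootMultiplicity_dvd p a) h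

private lemma rm_le_rev (q : Polynomial ℂ) (hq : q ≠ 0) (w : ℂ) (hw : w ≠ 0) :
    rootMultiplicity w q ≤ rootMultiplicity w⁻¹ q.reverse := by
  have hrev : q.reverse ≠ 0 := by simpa [reverse_eq_zero] using hq
  rw [le_rootMultiplicity_iff hrev]
  obtain ⟨h, hh⟩ := pow_rootMultiplicity_dvd q w
  have hXr : (X - C w : Polynomial ℂ).reverse = C (-w) * (X - C w⁻¹) := by
    have e1 : (X - C w : Polynomial ℂ) = X + C (-w) := by rw [map_neg]; ring
    have e2 : (X : Polynomial ℂ).reverse = 1 := by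
      have := reverse_X_mul (1 : Polynomial ℂ)
      rw [mul_one] at this
      rw [this, ← C_1, reverse_C]
    rw [e1, reverse_add_C, e2, natDegree_X, pow_one, mul_sub, ← C_mul,
      neg_mul, mul_inv_cancel₀ hw]
    simp only [map_neg, map_one]
    ring
  set k := rootMultiplicity w q with hk
  refine ⟨(C (-w)) ^ k * h.reverse, ?_⟩
  conv_lhs => rw [hh]
  rw [reverse_mul_of_domain, rev_pow', hXr, mul_pow]
  ring

private lemma revrev_dvd (q : Polynomial ℂ) : q.reverse.reverse ∣ q := by
  refine ⟨X ^ q.natTrailingDegree, ?_⟩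
  conv_lhs => rw [← q.mirror_mirror]
  rw [show q.mirror.mirror = q.mirror.reverse * X ^ q.mirror.natTrailingDegree from rfl,
    mirror_natTrailingDegree,
    show q.mirror = q.reverse * X ^ q.natTrailingDegree from rfl, reverse_mul_X_pow]

private lemma map_rev (g : Polynomial ℤ) :
    (g.reverse).map (Int.castRingHom ℂ) = (g.map (Int.castRingHom ℂ)).reverse := by
  unfold Polynomial.reverse
  rw [reflect_map, natDegree_map_eq_of_injective Int.cast_injective]

private lemma rm_conj (p : Polynomial ℤ) (z : ℂ) :
    rootMultiplicity ((starRingEnd ℂ) z) (p.map (Int.castRingHom ℂ))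
      = rootMultiplicity z (p.map (Int.castRingHom ℂ)) := by
  have hfix : (p.map (Int.castRingHom ℂ)).map (starRingEnd ℂ) = p.map (Int.castRingHom ℂ) := by
    rw [map_map]; congr 1; exact RingHom.ext_int _ _
  have := eq_rootMultiplicity_map (p := p.map (Int.castRingHom ℂ))
    (f := starRingEnd ℂ) (RingHom.injective _) z
  rw [hfix] at this
  exact this.symm

private lemma rm_rev_eq (g : Polynomial ℤ) (hg : g ≠ 0) (z : ℂ) (hz0 : z ≠ 0)
    (hconj : (starRingEnd ℂ) z = z⁻¹) :
    rootMultiplicity z ((g.reverse).map (Int.castRingHom ℂ))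
      = rootMultiplicity z (g.map (Int.castRingHom ℂ)) := by
  set G := g.map (Int.castRingHom ℂ) with hG
  have hGne : G ≠ 0 := (Polynomial.map_ne_zero_iff Int.cast_injective).mpr hg
  have hGrev : G.reverse ≠ 0 := by simpa [reverse_eq_zero] using hGne
  have hinv : ∀ p : Polynomial ℤ, rootMultiplicity z⁻¹ (p.map (Int.castRingHom ℂ))
      = rootMultiplicity z (p.map (Int.castRingHom ℂ)) := by
    intro p
    rw [← hconj, rm_conj]
  rw [map_rev, ← hG]
  refine le_antisymm ?_ ?_
  · calc rootMultiplicity z G.reverse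
        ≤ rootMultiplicity z⁻¹ G.reverse.reverse := rm_le_rev _ hGrev _ hz0
      _ ≤ rootMultiplicity z⁻¹ G := rm_dvd_le (revrev_dvd G) hGne _
      _ = rootMultiplicity z G := hinv g
  · calc rootMultiplicity z G
        ≤ rootMultiplicity z⁻¹ G.reverse := rm_le_rev _ hGne _ hz0
      _ = rootMultiplicity z G.reverse := by
          rw [← map_rev, hinv g.reverse, map_rev]

private lemma rm_prod {ι : Type*} [DecidableEq ι] (s : Finset ι) (f : ι → Polynomial ℂ)
    (hf : ∀ i ∈ s, f i ≠ 0) (z : ℂ) :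
    rootMultiplicity z (∏ i ∈ s, f i) = ∑ i ∈ s, rootMultiplicity z (f i) := by
  induction s using Finset.induction with
  | empty => simp [rootMultiplicity_eq_zero]
  | @insert a s hnot ih =>
    rw [Finset.prod_insert hnot, Finset.sum_insert hnot,
      rootMultiplicity_mul (mul_ne_zero (hf a (Finset.mem_insert_self a s))
        (Finset.prod_ne_zero_iff.mpr fun i hi => hf i (Finset.mem_insert_of_mem hi))),
      ih (fun i hi => hf i (Finset.mem_insert_of_mem hi))]

private lemma rm_pow (p : Polynomial ℂ) (hp : p ≠ 0) (k : ℕ) (z : ℂ) :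
    rootMultiplicity z (p ^ k) = k * rootMultiplicity z p := by
  induction k with
  | zero => simp [rootMultiplicity_eq_zero]
  | succ k ih =>
    rw [pow_succ, rootMultiplicity_mul (mul_ne_zero (pow_ne_zero _ hp) hp), ih]
    ring

private lemma one_sub_X_pow_ne (m : ℕ) (hm : m ≠ 0) : (1 - X ^ m : Polynomial ℂ) ≠ 0 := by
  intro h
  have := congrArg (eval 0) h
  simp [zero_pow hm] at this

private lemma rm_one_sub_one {z : ℂ} (hz0 : z ≠ 0) {m : ℕ} (hm : m ≠ 0) (hzm : z ^ m = 1) :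
    rootMultiplicity z (1 - X ^ m : Polynomial ℂ) = 1 := by
  have hp := one_sub_X_pow_ne m hm
  have h1 : 0 < rootMultiplicity z (1 - X ^ m : Polynomial ℂ) :=
    (rootMultiplicity_pos hp).mpr (by simp [IsRoot, hzm])
  have h2 : ¬ 1 < rootMultiplicity z (1 - X ^ m : Polynomial ℂ) := by
    rw [one_lt_rootMultiplicity_iff_isRoot hp]
    rintro ⟨-, hd⟩
    simp only [derivative_sub, derivative_one, derivative_X_pow, IsRoot, eval_sub, eval_zero,
      zero_sub, eval_mul, eval_neg, eval_natCast, eval_pow, eval_X, neg_eq_zero,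
      mul_eq_zero, eval_C] at hd
    rcases hd with hd | hd
    · exact hm (by exact_mod_cast hd)
    · exact hz0 (pow_eq_zero_iff'.mp hd).1
  omega

private lemma rm_one_sub_zero {z : ℂ} {m : ℕ} (hzm : z ^ m ≠ 1) :
    rootMultiplicity z (1 - X ^ m : Polynomial ℂ) = 0 := by
  apply rootMultiplicity_eq_zero
  simp only [IsRoot, eval_sub, eval_one, eval_pow, eval_X]
  exact fun h => hzm (by linear_combination -h)

/-- The Alexander polynomial
`Δ = (1 − t^α)^{n−2}(1 − t)/∏_j(1 − t^{c_j})` fails the Fox–Milnor condition: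
there are no `g ∈ ℤ[t]`, `r ∈ ℕ` and sign `ε ∈ {1, −1}` with
`Δ(t) = ε·t^r·g(t)·g*(t)`, where `g*(t) = t^{deg g}·g(1/t)` is the reversal
of `g` (Mathlib's `Polynomial.reverse`). -/
theorem alexander_poly_not_fox_milnor
    (n : ℕ) (hn : 3 ≤ n) (a : Fin (n - 1) → ℕ)
    (ha : ∀ j, 2 ≤ a j)
    (hcop : ∀ i j, i ≠ j → Nat.Coprime (a i) (a j))
    (α : ℕ) (hα : α = ∏ j, a j)
    (c : Fin (n - 1) → ℕ) (hc : ∀ j, a j * c j = α)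
    (Δ : Polynomial ℤ)
    (hΔ : Δ * ∏ j, (1 - (Polynomial.X : Polynomial ℤ) ^ (c j))
        = (1 - (Polynomial.X : Polynomial ℤ) ^ α) ^ (n - 2) *
            (1 - (Polynomial.X : Polynomial ℤ))) :
    ¬ ∃ (g : Polynomial ℤ) (r : ℕ) (ε : ℤ), (ε = 1 ∨ ε = -1) ∧
        Δ = Polynomial.C ε * Polynomial.X ^ r * g * g.reverse := by
  rintro ⟨g, r, ε, hε, hfac⟩
  have hn1 : 2 ≤ n - 1 := by omega
  set j0 : Fin (n - 1) := ⟨0, by omega⟩ with hj0def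
  set j1 : Fin (n - 1) := ⟨1, by omega⟩ with hj1def
  have hj01 : j0 ≠ j1 := by simp [hj0def, hj1def, Fin.ext_iff]
  set d := a j0 * a j1 with hd
  have hd4 : 4 ≤ d := by
    calc 4 = 2 * 2 := rfl
    _ ≤ a j0 * a j1 := Nat.mul_le_mul (ha j0) (ha j1)
  have hd0 : d ≠ 0 := by omega
  have hαpos : 0 < α := by
    rw [hα]; exact Finset.prod_pos fun j _ => by have := ha j; omega
  have hc0 : ∀ j, c j ≠ 0 := by
    intro j h
    have := hc j
    rw [h, mul_zero] at this
    omega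
  have hcval : ∀ j, c j = ∏ i ∈ Finset.univ.erase j, a i := by
    intro j
    have h1 : a j * c j = a j * ∏ i ∈ Finset.univ.erase j, a i := by
      rw [hc j, hα, ← Finset.mul_prod_erase _ _ (Finset.mem_univ j)]
    exact Nat.eq_of_mul_eq_mul_left (by have := ha j; omega) h1
  have hcoc : ∀ k, Nat.Coprime (a k) (c k) := by
    intro k
    rw [hcval k]
    exact Nat.Coprime.prod_right fun i hi =>
      hcop k i fun h => (Finset.mem_erase.mp hi).1 h.symm
  have hnotdvd2 : ∀ k l : Fin (n - 1), ¬ a k * a l ∣ c k := by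
    intro k l hdvd
    have hdvd0 : a k ∣ c k := dvd_trans (Dvd.intro _ rfl) hdvd
    have := (hcoc k).eq_one_of_dvd hdvd0
    have := ha k
    omega
  have hnotdvd : ∀ j, (j = j0 ∨ j = j1) → ¬ d ∣ c j := by
    intro j hj
    rcases hj with h | h
    · rw [h]; exact hnotdvd2 j0 j1
    · rw [h, hd, mul_comm]; exact hnotdvd2 j1 j0
  have hdvd : ∀ j, j ≠ j0 → j ≠ j1 → d ∣ c j := by
    intro j h0 h1
    rw [hcval j]
    exact Nat.Coprime.mul_dvd_of_dvd_of_dvd (hcop j0 j1 hj01)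
      (Finset.dvd_prod_of_mem a (Finset.mem_erase.mpr ⟨fun h => h0 h.symm, Finset.mem_univ _⟩))
      (Finset.dvd_prod_of_mem a (Finset.mem_erase.mpr ⟨fun h => h1 h.symm, Finset.mem_univ _⟩))
  have hdα : d ∣ α := by
    rw [← hc j0, hd]
    exact mul_dvd_mul_left (a j0) (by
      rw [hcval j0]
      exact Finset.dvd_prod_of_mem a
        (Finset.mem_erase.mpr ⟨fun h => hj01 h.symm, Finset.mem_univ _⟩))
  -- the primitive d-th root of unity
  have hz : IsPrimitiveRoot (Complex.exp (2 * Real.pi * Complex.I / d)) d :=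
    Complex.isPrimitiveRoot_exp d hd0
  set z : ℂ := Complex.exp (2 * Real.pi * Complex.I / d) with hzdef
  have hz0 : z ≠ 0 := Complex.exp_ne_zero _
  have hzd : z ^ d = 1 := hz.pow_eq_one
  have hnorm : ‖z‖ = 1 := Complex.norm_eq_one_of_pow_eq_one hzd hd0
  have hconj : (starRingEnd ℂ) z = z⁻¹ := (Complex.inv_eq_conj hnorm).symm
  have hpowiff : ∀ m : ℕ, z ^ m = 1 ↔ d ∣ m := fun m => hz.pow_eq_one_iff_dvd m
  have hzα : z ^ α = 1 := (hpowiff α).mpr hdα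
  have hz1 : z ≠ 1 := hz.ne_one (by omega)
  -- map the defining equation to ℂ
  have hmapΔ := congrArg (Polynomial.map (Int.castRingHom ℂ)) hΔ
  simp only [Polynomial.map_mul, Polynomial.map_prod, Polynomial.map_sub, Polynomial.map_one,
    Polynomial.map_pow, Polynomial.map_X] at hmapΔ
  set D := Δ.map (Int.castRingHom ℂ) with hD
  -- nonvanishing
  have hone_sub_X : (1 - X : Polynomial ℂ) ≠ 0 := by
    have := one_sub_X_pow_ne 1 one_ne_zero
    rwa [pow_one] at this
  have hRHSne : ((1 - X ^ α) ^ (n - 2) * (1 - X) : Polynomial ℂ) ≠ 0 :=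
    mul_ne_zero (pow_ne_zero _ (one_sub_X_pow_ne α (by omega))) hone_sub_X
  have hPfac : ∀ j : Fin (n - 1), (1 - X ^ (c j) : Polynomial ℂ) ≠ 0 :=
    fun j => one_sub_X_pow_ne _ (hc0 j)
  have hPne : (∏ j, (1 - X ^ (c j) : Polynomial ℂ)) ≠ 0 :=
    Finset.prod_ne_zero_iff.mpr fun j _ => hPfac j
  have hDne : D ≠ 0 := by
    intro h
    rw [h, zero_mul] at hmapΔ
    exact hRHSne hmapΔ.symm
  -- root multiplicity of both sides at z
  have hrmeq := congrArg (rootMultiplicity z) hmapΔ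
  rw [rootMultiplicity_mul (mul_ne_zero hDne hPne),
    rootMultiplicity_mul hRHSne,
    rm_pow _ (one_sub_X_pow_ne α (by omega)),
    rm_one_sub_one hz0 (by omega : α ≠ 0) hzα,
    show rootMultiplicity z (1 - X : Polynomial ℂ) = 0 by
      have := rm_one_sub_zero (z := z) (m := 1) (by rwa [pow_one])
      rwa [pow_one] at this,
    rm_prod _ _ (fun j _ => hPfac j)] at hrmeq
  -- the sum over j
  have hterm : ∀ j ∈ (Finset.univ : Finset (Fin (n - 1))),
      rootMultiplicity z (1 - X ^ (c j) : Polynomial ℂ)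
        = if j = j0 ∨ j = j1 then 0 else 1 := by
    intro j _
    by_cases hj : j = j0 ∨ j = j1
    · rw [if_pos hj]
      exact rm_one_sub_zero fun h => hnotdvd j hj ((hpowiff (c j)).mp h)
    · rw [if_neg hj]
      push_neg at hj
      exact rm_one_sub_one hz0 (hc0 j) ((hpowiff (c j)).mpr (hdvd j hj.1 hj.2))
  rw [Finset.sum_congr rfl hterm, Finset.sum_ite, Finset.sum_const, Finset.sum_const] at hrmeq
  have hfilter : Finset.univ.filter (fun j => j = j0 ∨ j = j1) = ({j0, j1} : Finset _) := by
    ext x; simp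
  have hcard2 : ({j0, j1} : Finset (Fin (n - 1))).card = 2 := by
    rw [Finset.card_insert_of_notMem (by simp [hj01]), Finset.card_singleton]
  have htot := Finset.card_filter_add_card_filter_not
    (s := (Finset.univ : Finset (Fin (n - 1)))) (p := fun j => j = j0 ∨ j = j1)
  rw [hfilter, hcard2, Finset.card_univ, Fintype.card_fin] at htot
  rw [hfilter, hcard2] at hrmeq
  simp only [smul_eq_mul, mul_zero, mul_one, zero_add] at hrmeq
  -- conclude rootMultiplicity z D = 1
  have hrmD : rootMultiplicity z D = 1 := by omega
  -- the Fox–Milnor factorization side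
  have hΔne : Δ ≠ 0 := by
    intro h
    rw [h, Polynomial.map_zero] at hD
    exact hDne hD
  have hgne : g ≠ 0 := by
    intro h
    rw [h] at hfac
    simp only [mul_zero, reverse_zero, zero_mul] at hfac
    exact hΔne hfac
  have hεne : (ε : ℂ) ≠ 0 := by
    rcases hε with rfl | rfl <;> norm_num
  have hGne : g.map (Int.castRingHom ℂ) ≠ 0 :=
    (Polynomial.map_ne_zero_iff Int.cast_injective).mpr hgne
  have hGrevne : (g.reverse).map (Int.castRingHom ℂ) ≠ 0 :=
    (Polynomial.map_ne_zero_iff Int.cast_injective).mpr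
      (by simpa [reverse_eq_zero] using hgne)
  have hmapfac := congrArg (Polynomial.map (Int.castRingHom ℂ)) hfac
  simp only [Polynomial.map_mul, Polynomial.map_pow, Polynomial.map_X, map_C] at hmapfac
  rw [← hD] at hmapfac
  have hrmD2 := congrArg (rootMultiplicity z) hmapfac
  have hCne : (C ((Int.castRingHom ℂ) ε) : Polynomial ℂ) ≠ 0 := by
    simpa using hεne
  have hXrne : (X ^ r : Polynomial ℂ) ≠ 0 := pow_ne_zero _ X_ne_zero
  rw [rootMultiplicity_mul (mul_ne_zero (mul_ne_zero (mul_ne_zero hCne hXrne) hGne) hGrevne),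
    rootMultiplicity_mul (mul_ne_zero (mul_ne_zero hCne hXrne) hGne),
    rootMultiplicity_mul (mul_ne_zero hCne hXrne),
    rootMultiplicity_C,
    show rootMultiplicity z (X ^ r : Polynomial ℂ) = 0 from
      rootMultiplicity_eq_zero (by simp [IsRoot, pow_ne_zero, hz0]),
    rm_rev_eq g hgne z hz0 hconj] at hrmD2
  rw [hrmD] at hrmD2
  omega
end
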